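/- Let d₀ be the set of sequences in [0,1] converging to 0, with the σ-algebra inherited as a subspace of the countable product of copies of [0,1] (each with the Borel σ-algebra). Then every affine map h : d₀ → [0,1] is measurable, where [0,1] carries the Borel σ-algebra. -/

import Mathlib

/-! Comparing midpoints, an affine `h` satisfies `h x + h y = h x' + h y'` whenever
`x + y = x' + y'`; setting one coordinate at a time then gives `h x = h 0 + ∑ (h eᵢ - h 0) xᵢ`
for finitely supported `x`, so each `x ↦ h (truncate n x)` is measurable. If the tail of
`x` beyond `n` is at most `δ`, then `x = (1 - δ) • truncate n x + δ • z` for some `z ∈ d₀`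
(the tail blown up by `δ⁻¹`), so `|h x - h (truncate n x)| ≤ δ` because `h` takes values in
`[0,1]`. Hence `h` is a pointwise limit of measurable functions. -/

open Set Filter

/-- `d₀`: the set of sequences in `[0,1]` converging to `0`, a measurable subspace of
the countable product of copies of `[0,1]`. -/
def d0 : Set (ℕ → ℝ) :=
  {x | (∀ n, x n ∈ Icc (0:ℝ) 1) ∧ Tendsto x atTop (nhds 0)}

open Topology Function

lemma mem_d0_of_eventuallyEq {x y : ℕ → ℝ} (hy : ∀ i, y i ∈ Icc (0:ℝ) 1)
    (hx : Tendsto x atTop (𝓝 0)) (hxy : x =ᶠ[atTop] y) : y ∈ d0 :=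
  ⟨hy, hx.congr' hxy⟩

lemma zero_mem_d0 : (0 : ℕ → ℝ) ∈ d0 :=
  ⟨fun _ => ⟨le_rfl, zero_le_one⟩, tendsto_const_nhds⟩

lemma update_mem_d0 {x : ℕ → ℝ} (hx : x ∈ d0) (n : ℕ) {c : ℝ} (hc : c ∈ Icc (0:ℝ) 1) :
    update x n c ∈ d0 := by
  refine mem_d0_of_eventuallyEq (fun i => ?_) hx.2 ?_
  · rcases eq_or_ne i n with rfl | hi
    · simpa using hc
    · simpa [hi] using hx.1 i
  · filter_upwards [eventually_gt_atTop n] with i hi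
    rw [update_of_ne hi.ne']

lemma convex_d0 : Convex ℝ d0 := by
  intro x hx y hy a b ha hb hab
  refine ⟨fun i => ⟨?_, ?_⟩, ?_⟩
  · have := (hx.1 i).1; have := (hy.1 i).1
    simp only [Pi.add_apply, Pi.smul_apply, smul_eq_mul]
    positivity
  · have := (hx.1 i).2; have := (hy.1 i).2
    simp only [Pi.add_apply, Pi.smul_apply, smul_eq_mul]
    nlinarith
  · have := (hx.2.const_mul a).add (hy.2.const_mul b)
    rwa [mul_zero, mul_zero, add_zero] at this

def zeroD0 : d0 := ⟨0, zero_mem_d0⟩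

def basisD0 (n : ℕ) : d0 := ⟨update 0 n 1, update_mem_d0 zero_mem_d0 n ⟨zero_le_one, le_rfl⟩⟩

def truncate (n : ℕ) (x : d0) : d0 :=
  ⟨fun i => if i < n then x.1 i else 0, by
    refine mem_d0_of_eventuallyEq (fun i => ?_) tendsto_const_nhds ?_
    · split_ifs
      exacts [x.2.1 i, ⟨le_rfl, zero_le_one⟩]
    · filter_upwards [eventually_ge_atTop n] with i hi
      simp [hi.not_gt]⟩

def AffineOn {ι : Type*} (S : Set (ι → ℝ)) (h : S → ℝ) : Prop :=
  ∀ (x y : S) (r : ℝ), r ∈ Icc (0:ℝ) 1 →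
    ∀ hm : (fun i => r * (x : ι → ℝ) i + (1 - r) * (y : ι → ℝ) i) ∈ S,
    h ⟨_, hm⟩ = r * h x + (1 - r) * h y

namespace AffineOn

section General

variable {ι : Type*} {S : Set (ι → ℝ)} {h : S → ℝ}

lemma apply_eq (haff : AffineOn S h) {x y w : S} {r : ℝ} (hr : r ∈ Icc (0:ℝ) 1)
    (hw : (w : ι → ℝ) = fun i => r * (x : ι → ℝ) i + (1 - r) * (y : ι → ℝ) i) :
    h w = r * h x + (1 - r) * h y := by
  obtain ⟨w, hwS⟩ := w
  subst hw
  exact haff x y r hr hwS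

lemma add_eq_add (haff : AffineOn S h) (hS : Convex ℝ S) {x y x' y' : S}
    (hxy : (x : ι → ℝ) + y = x' + y') : h x + h y = h x' + h y' := by
  have hhalf : (1/2 : ℝ) ∈ Icc (0:ℝ) 1 := by norm_num
  let w : S := ⟨(1/2 : ℝ) • (x : ι → ℝ) + (1/2 : ℝ) • (y : ι → ℝ),
    hS x.2 y.2 (by norm_num) (by norm_num) (by norm_num)⟩
  have hw : h w = 1/2 * h x + (1 - 1/2) * h y :=
    haff.apply_eq hhalf (funext fun i => by
      simp only [w, Pi.add_apply, Pi.smul_apply, smul_eq_mul]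
      ring)
  have hw' : h w = 1/2 * h x' + (1 - 1/2) * h y' :=
    haff.apply_eq hhalf (funext fun i => by
      have := congrFun hxy i
      simp only [Pi.add_apply] at this
      simp only [w, Pi.add_apply, Pi.smul_apply, smul_eq_mul]
      linarith)
  linarith

end General

variable {h : d0 → ℝ}

lemma apply_update (haff : AffineOn d0 h) {y : d0} {n : ℕ} (hyn : y.1 n = 0)
    {t : ℝ} (ht : t ∈ Icc (0:ℝ) 1) :
    h ⟨update y n t, update_mem_d0 y.2 n ht⟩ = h y + t * (h (basisD0 n) - h zeroD0) := by
  have h1 := haff.add_eq_add convex_d0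
    (x := ⟨update y n 1, update_mem_d0 y.2 n ⟨zero_le_one, le_rfl⟩⟩) (y := zeroD0)
    (x' := y) (y' := basisD0 n) (funext fun i => by
      rcases eq_or_ne i n with rfl | hi
      · simp [zeroD0, basisD0, hyn]
      · simp [zeroD0, basisD0, hi])
  have h2 := haff.apply_eq ht (w := ⟨update y n t, update_mem_d0 y.2 n ht⟩)
    (x := ⟨update y n 1, update_mem_d0 y.2 n ⟨zero_le_one, le_rfl⟩⟩) (y := y)
    (funext fun i => by
      rcases eq_or_ne i n with rfl | hi
      · simp [hyn]
      · simp [hi]; ring)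
  linear_combination h2 + t * h1

lemma apply_truncate (haff : AffineOn d0 h) (n : ℕ) (x : d0) :
    h (truncate n x) = h zeroD0 + ∑ i ∈ Finset.range n, (h (basisD0 i) - h zeroD0) * x.1 i := by
  induction n with
  | zero =>
    rw [Finset.sum_range_zero, add_zero]
    rfl
  | succ n ih =>
    have hstep : truncate (n + 1) x =
        ⟨update (truncate n x).1 n (x.1 n), update_mem_d0 (truncate n x).2 n (x.2.1 n)⟩ := by
      ext i
      simp only [truncate, update_apply]
      split_ifs <;> first | rfl | omega | simp_all
    rw [hstep, haff.apply_update (by simp [truncate]) (x.2.1 n), Finset.sum_range_succ, ih]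
    ring

lemma abs_sub_apply_truncate_le (haff : AffineOn d0 h) (hmaps : ∀ x, h x ∈ Icc (0:ℝ) 1)
    (x : d0) {n : ℕ} {δ : ℝ} (hδ0 : 0 < δ) (hδ1 : δ ≤ 1) (htail : ∀ i, n ≤ i → x.1 i ≤ δ) :
    |h x - h (truncate n x)| ≤ δ := by
  let z : d0 := ⟨fun i => if i < n then x.1 i else x.1 i / δ, by
    refine mem_d0_of_eventuallyEq (fun i => ?_) (by simpa using x.2.2.div_const δ) ?_
    · split_ifs with hi
      · exact x.2.1 i
      · exact ⟨div_nonneg (x.2.1 i).1 hδ0.le, (div_le_one hδ0).2 (htail i (not_lt.1 hi))⟩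
    · filter_upwards [eventually_ge_atTop n] with i hi
      simp [hi.not_gt]⟩
  have hsplit : h x = (1 - δ) * h (truncate n x) + (1 - (1 - δ)) * h z :=
    haff.apply_eq ⟨by linarith, by linarith⟩ (funext fun i => by
      by_cases hi : i < n
      · simp [truncate, z, hi]; ring
      · simp [truncate, z, hi]; field_simp)
  have hz := hmaps z
  have ht := hmaps (truncate n x)
  have hdiff : h x - h (truncate n x) = δ * (h z - h (truncate n x)) := by rw [hsplit]; ring
  rw [hdiff, abs_mul, abs_of_pos hδ0]
  exact mul_le_of_le_one_right hδ0.le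
    (abs_sub_le_iff.2 ⟨by linarith [hz.2, ht.1], by linarith [hz.1, ht.2]⟩)

lemma tendsto_apply_truncate (haff : AffineOn d0 h) (hmaps : ∀ x, h x ∈ Icc (0:ℝ) 1) (x : d0) :
    Tendsto (fun n => h (truncate n x)) atTop (𝓝 (h x)) := by
  rw [Metric.tendsto_atTop]
  intro ε hε
  set δ := min (ε / 2) 1
  have hδ0 : 0 < δ := lt_min (by linarith) one_pos
  obtain ⟨N, hN⟩ := eventually_atTop.1 (x.2.2.eventually (eventually_le_nhds hδ0))
  refine ⟨N, fun n hn => ?_⟩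
  rw [dist_comm, Real.dist_eq]
  refine (haff.abs_sub_apply_truncate_le hmaps x hδ0 (min_le_right _ _)
    fun i hi => hN i (hn.trans hi)).trans_lt ?_
  linarith [min_le_left (ε / 2) 1]

end AffineOn

/-- Every affine map `d₀ → [0,1]` is measurable. -/
theorem stmt13 (h : d0 → ℝ)
    (hmaps : ∀ x, h x ∈ Icc (0:ℝ) 1)
    (haff : ∀ (x y : d0) (r : ℝ), r ∈ Icc (0:ℝ) 1 →
      ∀ hm : (fun i => r * (x : ℕ → ℝ) i + (1 - r) * (y : ℕ → ℝ) i) ∈ d0,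
      h ⟨_, hm⟩ = r * h x + (1 - r) * h y) :
    Measurable h := by
  have haff : AffineOn d0 h := haff
  have hmeas : ∀ n, Measurable fun x => h (truncate n x) := fun n => by
    simp_rw [haff.apply_truncate n]
    exact measurable_const.add <| Finset.measurable_sum _ fun i _ =>
      measurable_const.mul <| (measurable_pi_apply i).comp measurable_subtype_coe
  exact measurable_of_tendsto_metrizable hmeas
    (tendsto_pi_nhds.2 (haff.tendsto_apply_truncate hmaps))
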